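/- arXiv:2006.07024 — 3 statements merged into one kernel-verified Lean document; each statement's English description precedes it below -/
import Mathlib

section
/- Let M ∈ ℝ^{D×D} be a symmetric positive semidefinite matrix and let x, x⁺, x⁻ ∈ ℝ^D with M(x⁺ − x⁻) ≠ 0. Then every δ ∈ ℝ^D satisfying d_M(x + δ, x⁻) ≤ d_M(x + δ, x⁺) has Euclidean norm ‖δ‖₂ ≥ [d_M(x, x⁻) − d_M(x, x⁺)]₊ / (2 ‖M(x⁺ − x⁻)‖₂). -/
open Matrix

/-- Mahalanobis (squared) distance `d_M(x, x') = (x - x')ᵀ M (x - x')`. -/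
noncomputable def mah {D : ℕ} (M : Matrix (Fin D) (Fin D) ℝ) (x x' : Fin D → ℝ) : ℝ :=
  (x - x') ⬝ᵥ M.mulVec (x - x')

/-- Euclidean norm `‖v‖₂` on `Fin D → ℝ`. -/
noncomputable def eucNorm {D : ℕ} (v : Fin D → ℝ) : ℝ :=
  Real.sqrt (v ⬝ᵥ v)


lemma cs_dot {D : ℕ} (a b : Fin D → ℝ) : a ⬝ᵥ b ≤ Real.sqrt (a ⬝ᵥ a) * Real.sqrt (b ⬝ᵥ b) := by
  have h := Finset.sum_mul_sq_le_sq_mul_sq Finset.univ a b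
  have h2 : (a ⬝ᵥ b) ^ 2 ≤ (a ⬝ᵥ a) * (b ⬝ᵥ b) := by
    simpa [dotProduct, pow_two] using h
  have hnn : (0:ℝ) ≤ (a ⬝ᵥ a) * (b ⬝ᵥ b) := by
    apply mul_nonneg <;> exact Finset.sum_nonneg fun i _ => mul_self_nonneg _
  calc a ⬝ᵥ b ≤ |a ⬝ᵥ b| := le_abs_self _
    _ = Real.sqrt ((a ⬝ᵥ b) ^ 2) := (Real.sqrt_sq_eq_abs _).symm
    _ ≤ Real.sqrt ((a ⬝ᵥ a) * (b ⬝ᵥ b)) := Real.sqrt_le_sqrt h2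
    _ = _ := Real.sqrt_mul (Finset.sum_nonneg fun i _ => mul_self_nonneg _) _

lemma dot_self_pos {D : ℕ} {v : Fin D → ℝ} (h : v ≠ 0) : 0 < v ⬝ᵥ v := by
  rcases lt_or_eq_of_le (Finset.sum_nonneg fun i _ => mul_self_nonneg (v i) : (0:ℝ) ≤ v ⬝ᵥ v) with h1 | h1
  · exact h1
  · exact absurd (dotProduct_self_eq_zero.mp h1.symm) h

/-- every `δ` with `d_M(x + δ, x⁻) ≤ d_M(x + δ, x⁺)` satisfies
`‖δ‖₂ ≥ [d_M(x, x⁻) − d_M(x, x⁺)]₊ / (2‖M(x⁺ − x⁻)‖₂)`. -/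
theorem feasible_perturbation_norm_lower_bound {D : ℕ}
    (M : Matrix (Fin D) (Fin D) ℝ) (hM : M.PosSemidef) (x xp xm : Fin D → ℝ)
    (hMx : M.mulVec (xp - xm) ≠ 0)
    (δ : Fin D → ℝ) (hδ : mah M (x + δ) xm ≤ mah M (x + δ) xp) :
    eucNorm δ ≥ max (mah M x xm - mah M x xp) 0 / (2 * eucNorm (M.mulVec (xp - xm))) := by
  have hsym : Mᵀ = M := by simpa using hM.1.eq
  have symdot : ∀ a b : Fin D → ℝ, a ⬝ᵥ M.mulVec b = b ⬝ᵥ M.mulVec a := by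
    intro a b
    rw [dotProduct_mulVec, dotProduct_comm]
    congr 1
    rw [← mulVec_transpose, hsym]
  have expand : ∀ y : Fin D → ℝ, mah M (x + δ) y
      = mah M x y + 2 * (δ ⬝ᵥ M.mulVec (x - y)) + δ ⬝ᵥ M.mulVec δ := by
    intro y
    have : x + δ - y = (x - y) + δ := by abel
    rw [mah, this, mah]
    simp only [mulVec_add, add_dotProduct, dotProduct_add, symdot (x - y) δ]
    ring
  set w := M.mulVec (xp - xm) with hw
  have key : mah M x xm - mah M x xp ≤ 2 * (eucNorm δ * eucNorm w) := by
    have h1 : mah M x xm - mah M x xp ≤ 2 * ((-δ) ⬝ᵥ w) := by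
      have := hδ
      rw [expand xm, expand xp] at this
      have h2 : (-δ) ⬝ᵥ w = δ ⬝ᵥ M.mulVec (x - xp) - δ ⬝ᵥ M.mulVec (x - xm) := by
        rw [hw, neg_dotProduct]
        have : (xp - xm) = (x - xm) - (x - xp) := by abel
        rw [this, mulVec_sub, dotProduct_sub]
        ring
      rw [h2]; linarith
    have h3 : (-δ) ⬝ᵥ w ≤ eucNorm δ * eucNorm w := by
      have := cs_dot (-δ) w
      simpa [eucNorm, neg_dotProduct, dotProduct_neg] using this
    linarith
  have hNpos : 0 < eucNorm w := Real.sqrt_pos.mpr (dot_self_pos hMx)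
  have hδnn : 0 ≤ eucNorm δ := Real.sqrt_nonneg _
  rw [ge_iff_le, div_le_iff₀ (by positivity)]
  apply max_le
  · calc mah M x xm - mah M x xp ≤ 2 * (eucNorm δ * eucNorm w) := key
      _ = eucNorm δ * (2 * eucNorm w) := by ring
  · positivity
end

section
/- Let M ∈ ℝ^{D×D} be a symmetric positive semidefinite matrix and let x, x⁺, x⁻ ∈ ℝ^D with M(x⁺ − x⁻) ≠ 0. Then the minimum of ‖δ‖₂ over all δ ∈ ℝ^D satisfying d_M(x + δ, x⁻) ≤ d_M(x + δ, x⁺) exists and equals [d_M(x, x⁻) − d_M(x, x⁺)]₊ / (2 ‖M(x⁺ − x⁻)‖₂); that is, this value is attained by some feasible δ and is a lower bound on ‖δ‖₂ for every feasible δ. -/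
open Matrix

lemma dot_self_nonneg' {D : ℕ} (v : Fin D → ℝ) : 0 ≤ v ⬝ᵥ v :=
  Finset.sum_nonneg fun i _ => mul_self_nonneg (v i)

lemma eucNorm_sq' {D : ℕ} (v : Fin D → ℝ) : eucNorm v * eucNorm v = v ⬝ᵥ v :=
  Real.mul_self_sqrt (dot_self_nonneg' v)

lemma cs' {D : ℕ} (u v : Fin D → ℝ) : |u ⬝ᵥ v| ≤ eucNorm u * eucNorm v := by
  have h := Finset.sum_mul_sq_le_sq_mul_sq Finset.univ u v
  have h1 : |u ⬝ᵥ v| = Real.sqrt ((u ⬝ᵥ v) ^ 2) := (Real.sqrt_sq_eq_abs _).symm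
  rw [h1, eucNorm, eucNorm, ← Real.sqrt_mul (dot_self_nonneg' u)]
  apply Real.sqrt_le_sqrt
  calc (u ⬝ᵥ v) ^ 2 = (∑ i, u i * v i) ^ 2 := rfl
    _ ≤ (∑ i, u i ^ 2) * ∑ i, v i ^ 2 := h
    _ = (u ⬝ᵥ u) * (v ⬝ᵥ v) := by simp [dotProduct, sq]

/-- the minimum of `‖δ‖₂` over all `δ` satisfying
`d_M(x + δ, x⁻) ≤ d_M(x + δ, x⁺)` exists (is attained by a feasible `δ`) and equals
`[d_M(x, x⁻) − d_M(x, x⁺)]₊ / (2‖M(x⁺ − x⁻)‖₂)`. -/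
theorem triplet_minimum_perturbation {D : ℕ}
    (M : Matrix (Fin D) (Fin D) ℝ) (hM : M.PosSemidef) (x xp xm : Fin D → ℝ)
    (hMx : M.mulVec (xp - xm) ≠ 0) :
    (∃ δ : Fin D → ℝ, mah M (x + δ) xm ≤ mah M (x + δ) xp ∧
        eucNorm δ =
          max (mah M x xm - mah M x xp) 0 / (2 * eucNorm (M.mulVec (xp - xm)))) ∧
      ∀ δ : Fin D → ℝ, mah M (x + δ) xm ≤ mah M (x + δ) xp →
        max (mah M x xm - mah M x xp) 0 / (2 * eucNorm (M.mulVec (xp - xm))) ≤ eucNorm δ := by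
  set w : Fin D → ℝ := M.mulVec (xp - xm) with hw
  set g : ℝ := mah M x xm - mah M x xp with hg
  have htr : Mᵀ = M := by
    have := hM.1
    rwa [Matrix.IsHermitian, conjTranspose_eq_transpose_of_trivial] at this
  have hsym : ∀ u v : Fin D → ℝ, u ⬝ᵥ M.mulVec v = v ⬝ᵥ M.mulVec u := by
    intro u v
    rw [Matrix.dotProduct_mulVec, ← Matrix.mulVec_transpose, htr, dotProduct_comm]
  have quad : ∀ u δ : Fin D → ℝ,
      (u + δ) ⬝ᵥ M.mulVec (u + δ)
        = u ⬝ᵥ M.mulVec u + 2 * (δ ⬝ᵥ M.mulVec u) + δ ⬝ᵥ M.mulVec δ := by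
    intro u δ
    rw [Matrix.mulVec_add]
    simp only [dotProduct_add, add_dotProduct]
    rw [hsym u δ]; ring
  have key : ∀ δ : Fin D → ℝ,
      mah M (x + δ) xm - mah M (x + δ) xp = g + 2 * (δ ⬝ᵥ w) := by
    intro δ
    have e1 : x + δ - xm = (x - xm) + δ := add_sub_right_comm x δ xm
    have e2 : x + δ - xp = (x - xp) + δ := add_sub_right_comm x δ xp
    simp only [mah, e1, e2, quad, hg, hw]
    have h2 : δ ⬝ᵥ M.mulVec (xp - xm) = δ ⬝ᵥ M.mulVec xp - δ ⬝ᵥ M.mulVec xm := by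
      rw [Matrix.mulVec_sub, dotProduct_sub]
    have h3 : δ ⬝ᵥ M.mulVec (x - xm) = δ ⬝ᵥ M.mulVec x - δ ⬝ᵥ M.mulVec xm := by
      rw [Matrix.mulVec_sub, dotProduct_sub]
    have h4 : δ ⬝ᵥ M.mulVec (x - xp) = δ ⬝ᵥ M.mulVec x - δ ⬝ᵥ M.mulVec xp := by
      rw [Matrix.mulVec_sub, dotProduct_sub]
    rw [h2, h3, h4]; ring
  have feas : ∀ δ : Fin D → ℝ,
      (mah M (x + δ) xm ≤ mah M (x + δ) xp ↔ g + 2 * (δ ⬝ᵥ w) ≤ 0) := by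
    intro δ
    have := key δ
    constructor <;> intro h <;> linarith
  have hww : 0 < w ⬝ᵥ w := by
    obtain ⟨i, hi⟩ := Function.ne_iff.mp hMx
    have h1 : w i * w i ≤ w ⬝ᵥ w :=
      Finset.single_le_sum (f := fun j => w j * w j)
        (fun j _ => mul_self_nonneg _) (Finset.mem_univ i)
    have h2 : 0 < w i * w i := mul_self_pos.mpr hi
    linarith
  have hn : 0 < eucNorm w := Real.sqrt_pos.mpr hww
  have hnn : eucNorm w * eucNorm w = w ⬝ᵥ w := eucNorm_sq' w
  constructor
  · -- existence
    by_cases hgpos : g ≤ 0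
    · refine ⟨0, ?_, ?_⟩
      · rw [feas]; simp; linarith
      · have : eucNorm (0 : Fin D → ℝ) = 0 := by simp [eucNorm]
        rw [this, max_eq_right hgpos, zero_div]
    · push_neg at hgpos
      set c : ℝ := -(g / (2 * (w ⬝ᵥ w))) with hc
      refine ⟨c • w, ?_, ?_⟩
      · rw [feas]
        have : (c • w) ⬝ᵥ w = c * (w ⬝ᵥ w) := smul_dotProduct c w w
        rw [this, hc]
        field_simp
        ring_nf
        exact le_refl 0
      · have hdot : (c • w) ⬝ᵥ (c • w) = c ^ 2 * (w ⬝ᵥ w) := by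
          rw [smul_dotProduct, dotProduct_smul]; simp only [smul_eq_mul]; ring
        have : eucNorm (c • w) = |c| * eucNorm w := by
          rw [eucNorm, hdot, Real.sqrt_mul (sq_nonneg c), Real.sqrt_sq_eq_abs, eucNorm]
        rw [this, max_eq_left (by linarith)]
        have hcneg : c < 0 := by
          rw [hc]; simp only [neg_neg, neg_lt_zero]; positivity
        rw [abs_of_neg hcneg, hc, neg_neg]
        rw [← hnn]
        field_simp
  · -- lower bound
    intro δ hδ
    rw [feas] at hδ
    by_cases hgpos : g ≤ 0
    · rw [max_eq_right hgpos, zero_div]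
      exact Real.sqrt_nonneg _
    · push_neg at hgpos
      rw [max_eq_left (by linarith)]
      rw [div_le_iff₀ (by positivity)]
      have hcs := cs' δ w
      have habs : -(δ ⬝ᵥ w) ≤ |δ ⬝ᵥ w| := neg_le_abs _
      nlinarith
end

section
/- (Robustness verification for Mahalanobis K-NN, binary case.) Let {(x_i, y_i)}_{i ∈ T} be a finite family of points x_i ∈ ℝ^D with binary labels y_i, let (x, y_t) be a test instance, let M ∈ ℝ^{D×D} be a symmetric positive semidefinite matrix with M(x_i − x_j) ≠ 0 for all i with y_i = y_t and all j with y_j ≠ y_t, let K = 2k − 1 be odd, and assume |{i ∈ T : y_i = y_t}| ≥ k. Suppose δ ∈ ℝ^D is such that there exists N ⊆ T with |N| = K satisfying d_M(x + δ, x_n) ≤ d_M(x + δ, x_m) for all n ∈ N, m ∈ T \ N, and |{n ∈ N : y_n = y_t}| ≤ k − 1 (so the Mahalanobis K-NN classifier misclassifies x + δ). Then ‖δ‖₂ ≥ kthmin over j ∈ {j : y_j ≠ y_t} of (kthmax over i ∈ {i : y_i = y_t} of ε̃(x_i, x_j, x; M)), where kthmax and kthmin select the k-th largest and k-th smallest values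 respectively. -/
/-!
If `x + δ` is misclassified, its neighbour set `N` contains at least `k` points `x_j` of the
other label. For such a `j`, every point `x_i` of label `y_t` outside `N` is at least as far from
`x + δ` as `x_j`. Since `d_M(x + δ, x_j) - d_M(x + δ, x_i)` differs from
`d_M(x, x_j) - d_M(x, x_i)` by `2 δ ⬝ M(x_i - x_j)`, Cauchy–Schwarz gives
`ε̃(x_i, x_j, x; M) ≤ ‖δ‖₂` for all but the at most `k - 1` points of label `y_t` inside `N`.
Hence the `k`-th largest `ε̃` over `i` is at most `‖δ‖₂` for at least `k` indices `j`, and so is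
the `k`-th smallest of these maxima.
-/

open Matrix

/-- The `k`-th largest value (1-indexed) of `f` over the finite set `S`:
the `k`-th element of the values of `f` on `S` (with multiplicity) sorted in
nonincreasing order. -/
noncomputable def kthmax {α : Type*} (S : Finset α) (f : α → ℝ) (k : ℕ) : ℝ :=
  ((S.val.map f).sort (· ≤ ·)).getD (S.card - k) 0

/-- The `k`-th smallest value (1-indexed) of `g` over the finite set `T`:
the `k`-th element of the values of `g` on `T` (with multiplicity) sorted in
nondecreasing order. -/
noncomputable def kthmin {α : Type*} (T : Finset α) (g : α → ℝ) (k : ℕ) : ℝ :=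
  ((T.val.map g).sort (· ≤ ·)).getD (k - 1) 0


/-- `ε̃(x⁺, x⁻, x; M) = (d_M(x, x⁻) − d_M(x, x⁺)) / (2‖M(x⁺ − x⁻)‖₂)`. -/
noncomputable def epsTilde {D : ℕ} (M : Matrix (Fin D) (Fin D) ℝ) (xp xm x : Fin D → ℝ) : ℝ :=
  (mah M x xm - mah M x xp) / (2 * eucNorm (M.mulVec (xp - xm)))

theorem List.Pairwise.getD_le_of_countP_add_lt {l : List ℝ} (hl : l.Pairwise (· ≤ ·)) {n : ℕ}
    (hn : n < l.length) {c : ℝ} (h : l.countP (fun a => c < a) + n < l.length) :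
    l.getD n 0 ≤ c := by
  by_contra! hc
  rw [List.getD_eq_getElem _ _ hn] at hc
  have htail : (l[n] :: l.drop (n + 1)).Pairwise (· ≤ ·) :=
    List.drop_eq_getElem_cons hn ▸ hl.sublist (List.drop_sublist n l)
  have hdrop : ∀ a ∈ l.drop n, c < a := by
    rw [List.drop_eq_getElem_cons hn]
    rintro a (_ | ⟨_, ha⟩)
    exacts [hc, hc.trans_le (List.rel_of_pairwise_cons htail ha)]
  have hcount : (l.drop n).length ≤ l.countP (fun a => c < a) :=
    (List.countP_eq_length (p := fun a => c < a) |>.mpr (by simpa using hdrop)).ge.trans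
      (List.drop_sublist n l).countP_le
  rw [List.length_drop] at hcount
  omega

section OrderStatistics

variable {α : Type*} (S : Finset α) (g : α → ℝ) {k : ℕ} {c : ℝ}

theorem Finset.length_sort_map_val : ((S.val.map g).sort (· ≤ ·)).length = S.card := by
  rw [Multiset.length_sort, Multiset.card_map, Finset.card_val]

theorem Finset.countP_sort_map_val (p : ℝ → Prop) [DecidablePred p] :
    ((S.val.map g).sort (· ≤ ·)).countP (fun a => p a) = (S.filter fun a => p (g a)).card := by
  rw [← Multiset.coe_countP, Multiset.sort_eq, Multiset.countP_map]
  rfl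

theorem kthmin_le_of_le_card_filter (hk : 1 ≤ k) (h : k ≤ (S.filter fun a => g a ≤ c).card) :
    kthmin S g k ≤ c := by
  have hsplit := Finset.card_filter_add_card_filter_not (s := S) (p := fun a => g a ≤ c)
  simp only [not_le] at hsplit
  have hlen := S.length_sort_map_val g
  refine (Multiset.pairwise_sort _ _).getD_le_of_countP_add_lt (by omega) ?_
  rw [S.countP_sort_map_val g (c < ·)]
  omega

theorem kthmax_le_of_card_filter_lt (hk : 1 ≤ k) (hS : k ≤ S.card)
    (h : (S.filter fun a => c < g a).card < k) : kthmax S g k ≤ c := by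
  have hlen := S.length_sort_map_val g
  refine (Multiset.pairwise_sort _ _).getD_le_of_countP_add_lt (by omega) ?_
  rw [S.countP_sort_map_val g (c < ·)]
  omega

end OrderStatistics

section Mahalanobis

variable {D : ℕ} {M : Matrix (Fin D) (Fin D) ℝ}

theorem dotProduct_le_eucNorm_mul_eucNorm (u v : Fin D → ℝ) :
    u ⬝ᵥ v ≤ eucNorm u * eucNorm v := by
  simpa [eucNorm, dotProduct, sq] using Real.sum_mul_le_sqrt_mul_sqrt Finset.univ u v

theorem eucNorm_pos {v : Fin D → ℝ} (hv : v ≠ 0) : 0 < eucNorm v :=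
  Real.sqrt_pos.mpr <| (Finset.sum_nonneg fun i _ => mul_self_nonneg (v i)).lt_of_ne'
    (dotProduct_self_eq_zero.not.mpr hv)

theorem mah_add_left (hM : M.IsSymm) (x δ z : Fin D → ℝ) :
    mah M (x + δ) z = mah M x z + 2 * (δ ⬝ᵥ M *ᵥ (x - z)) + δ ⬝ᵥ M *ᵥ δ := by
  have hswap : (x - z) ⬝ᵥ M *ᵥ δ = δ ⬝ᵥ M *ᵥ (x - z) := by
    rw [dotProduct_mulVec, ← mulVec_transpose, hM.eq, dotProduct_comm]
  rw [mah, mah, show x + δ - z = (x - z) + δ by abel, mulVec_add, add_dotProduct,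
    dotProduct_add, dotProduct_add, hswap]
  ring

theorem mah_sub_mah_add_left (hM : M.IsSymm) (x δ a b : Fin D → ℝ) :
    mah M (x + δ) a - mah M (x + δ) b = mah M x a - mah M x b + 2 * (δ ⬝ᵥ M *ᵥ (b - a)) := by
  simp only [mah_add_left hM, mulVec_sub, dotProduct_sub]
  ring

theorem epsTilde_le_eucNorm (hM : M.IsSymm) {xp xm x δ : Fin D → ℝ} (hne : M *ᵥ (xp - xm) ≠ 0)
    (h : mah M (x + δ) xm ≤ mah M (x + δ) xp) : epsTilde M xp xm x ≤ eucNorm δ := by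
  have hshift := mah_sub_mah_add_left hM x δ xm xp
  have hcs : -(δ ⬝ᵥ M *ᵥ (xp - xm)) ≤ eucNorm δ * eucNorm (M *ᵥ (xp - xm)) := by
    have := dotProduct_le_eucNorm_mul_eucNorm (-δ) (M *ᵥ (xp - xm))
    rwa [neg_dotProduct, show eucNorm (-δ) = eucNorm δ by simp [eucNorm]] at this
  have hpos := eucNorm_pos hne
  rw [epsTilde, div_le_iff₀ (by positivity)]
  linarith

end Mahalanobis

/-- Robustness verification for Mahalanobis K-NN, binary case: if the
Mahalanobis `K`-NN classifier (`K = 2k − 1`) misclassifies `x + δ`, i.e. some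
`K`-nearest-neighbor set of `x + δ` contains at most `k − 1` points with label `y_t`, then
`‖δ‖₂ ≥ kthmin_{j : y_j ≠ y_t} kthmax_{i : y_i = y_t} ε̃(x_i, x_j, x; M)`. -/
theorem knn_robustness_verification {D : ℕ} {ι : Type*} [DecidableEq ι]
    (T : Finset ι) (xs : ι → Fin D → ℝ) (y : ι → Bool) (x : Fin D → ℝ) (yt : Bool)
    (M : Matrix (Fin D) (Fin D) ℝ) (hM : M.PosSemidef)
    (hMx : ∀ i ∈ T, ∀ j ∈ T, y i = yt → y j ≠ yt → M.mulVec (xs i - xs j) ≠ 0)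
    (k K : ℕ) (hk : 1 ≤ k) (hK : K = 2 * k - 1)
    (hsame : k ≤ (T.filter fun i => y i = yt).card)
    (δ : Fin D → ℝ) (N : Finset ι) (hNT : N ⊆ T) (hNcard : N.card = K)
    (hnear : ∀ n ∈ N, ∀ m ∈ T \ N, mah M (x + δ) (xs n) ≤ mah M (x + δ) (xs m))
    (hmaj : (N.filter fun n => y n = yt).card ≤ k - 1) :
    kthmin (T.filter fun j => y j ≠ yt)
        (fun j => kthmax (T.filter fun i => y i = yt)
          (fun i => epsTilde M (xs i) (xs j) x) k) k ≤ eucNorm δ := by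
  have hsymm : M.IsSymm := Matrix.isHermitian_iff_isSymm.mp hM.isHermitian
  have hopposite : k ≤ (N.filter fun n => y n ≠ yt).card := by
    have := Finset.card_filter_add_card_filter_not (s := N) (p := fun n => y n = yt)
    simp only [← ne_eq] at this
    omega
  have hkthmax : ∀ j ∈ N, y j ≠ yt →
      kthmax (T.filter fun i => y i = yt) (fun i => epsTilde M (xs i) (xs j) x) k ≤
        eucNorm δ := by
    intro j hjN hjy
    refine kthmax_le_of_card_filter_lt _ _ hk hsame <|
      Nat.lt_of_le_sub_one hk <| (Finset.card_le_card fun i hi => ?_).trans hmaj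
    obtain ⟨⟨hiT, hiy⟩, hfar⟩ := Finset.mem_filter.mp hi |>.imp_left Finset.mem_filter.mp
    refine Finset.mem_filter.mpr ⟨?_, hiy⟩
    by_contra hiN
    exact hfar.not_ge <| epsTilde_le_eucNorm hsymm (hMx i hiT j (hNT hjN) hiy hjy)
      (hnear j hjN i (Finset.mem_sdiff.mpr ⟨hiT, hiN⟩))
  refine kthmin_le_of_le_card_filter _ _ hk (hopposite.trans (Finset.card_le_card ?_))
  intro j hj
  obtain ⟨hjN, hjy⟩ := Finset.mem_filter.mp hj
  exact Finset.mem_filter.mpr ⟨Finset.mem_filter.mpr ⟨hNT hjN, hjy⟩, hkthmax j hjN hjy⟩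
end
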